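/- arXiv:2601.03876 — 2 statements merged into one kernel-verified Lean document; each statement's English description precedes it below -/
import Mathlib

section
/- For all t > 0, the Rogers dilogarithm satisfies Landau's identity 𝓛(−1/t) = −𝓛(1/(1+t)), where on negative reals 𝓛 is defined via the real-analytic continuation 𝓛(x) = Li₂(x) + (1/2)·log|x|·log(1−x). -/
/-!
Both sides are values of one function of `t` on `(0, ∞)`: the sum
`rogersL (-1/t) + rogersL (1/(1+t))` has derivative zero there, by the chain rule and
`𝓛'(x) = -(log (1-x)/x + log |x|/(1-x))/2`, so it is constant. As `t → ∞` both arguments tend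
to `0`, where `𝓛` is continuous with `𝓛(0) = 0` (because `x log x → 0`), so the constant is `0`.
-/

open Real MeasureTheory

/-- The real dilogarithm, defined for `x ≤ 1` via the integral
`Li₂(x) = -∫₀ˣ log(1-t)/t dt`. -/
noncomputable def Li2 (x : ℝ) : ℝ := -∫ t in (0:ℝ)..x, Real.log (1 - t) / t

/-- The Rogers dilogarithm `𝓛(x) = Li₂(x) + (1/2)·log|x|·log(1-x)`
(note `Real.log` of a negative number is the log of its absolute value,
and `Real.log 0 = 0`, so this formula also covers `x ≤ 0` and the endpoints). -/
noncomputable def rogersL (x : ℝ) : ℝ := Li2 x + (1/2) * Real.log x * Real.log (1 - x)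

open Filter Set Topology

theorem eq_of_hasDerivAt_zero_of_tendsto_atTop {E : Type*} [NormedAddCommGroup E]
    [NormedSpace ℝ E] {f : ℝ → E} {a : ℝ} {L : E} (hf : ∀ x ∈ Ioi a, HasDerivAt f 0 x)
    (hlim : Tendsto f atTop (𝓝 L)) {x : ℝ} (hx : a < x) : f x = L := by
  have hconst : ∀ y ∈ Ioi a, f y = f x := fun y hy =>
    isOpen_Ioi.is_const_of_deriv_eq_zero isPreconnected_Ioi
      (fun z hz => (hf z hz).differentiableAt.differentiableWithinAt)
      (fun z hz => (hf z hz).deriv) hy hx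
  refine tendsto_nhds_unique ?_ hlim
  exact tendsto_const_nhds.congr' <| (eventually_gt_atTop a).mono fun y hy => (hconst y hy).symm

/-- The integrand of `Li2` with its removable singularity filled in by `dilogKernel 0 = -1`
(whereas `Real.log (1 - 0) / 0 = 0`). -/
noncomputable def dilogKernel : ℝ → ℝ := dslope (fun t : ℝ => Real.log (1 - t)) 0

theorem hasDerivAt_log_one_sub {x : ℝ} (hx : x < 1) :
    HasDerivAt (fun t : ℝ => Real.log (1 - t)) (-1 / (1 - x)) x := by
  simpa using ((hasDerivAt_id x).const_sub 1).log (sub_ne_zero.mpr hx.ne')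

theorem dilogKernel_of_ne {t : ℝ} (ht : t ≠ 0) : dilogKernel t = Real.log (1 - t) / t := by
  simp [dilogKernel, dslope_of_ne _ ht, slope_def_field]

theorem continuousOn_dilogKernel : ContinuousOn dilogKernel (Iio 1) :=
  (continuousOn_dslope (Iio_mem_nhds one_pos)).mpr
    ⟨fun _ hx => (hasDerivAt_log_one_sub hx).continuousAt.continuousWithinAt,
      (hasDerivAt_log_one_sub one_pos).differentiableAt⟩

theorem Li2_eq_neg_integral_dilogKernel (x : ℝ) : Li2 x = -∫ t in (0:ℝ)..x, dilogKernel t := by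
  refine congrArg Neg.neg (intervalIntegral.integral_congr_ae ?_)
  filter_upwards [Measure.ae_ne volume (0 : ℝ)] with t ht _
  exact (dilogKernel_of_ne ht).symm

theorem hasDerivAt_Li2 {x : ℝ} (hx : x < 1) : HasDerivAt Li2 (-dilogKernel x) x := by
  have hsub : uIcc 0 x ⊆ Iio 1 := fun s hs => hs.2.trans_lt (max_lt one_pos hx)
  rw [funext Li2_eq_neg_integral_dilogKernel]
  exact (intervalIntegral.integral_hasDerivAt_right
    (continuousOn_dilogKernel.mono hsub).intervalIntegrable
    (continuousOn_dilogKernel.stronglyMeasurableAtFilter isOpen_Iio x hx)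
    (continuousOn_dilogKernel.continuousAt (Iio_mem_nhds hx))).neg

theorem hasDerivAt_rogersL {x : ℝ} (hx0 : x ≠ 0) (hx : x < 1) :
    HasDerivAt rogersL (-(Real.log (1 - x) / x + Real.log x / (1 - x)) / 2) x := by
  have hLi2 := hasDerivAt_Li2 hx
  rw [dilogKernel_of_ne hx0] at hLi2
  have h1x : (1:ℝ) - x ≠ 0 := sub_ne_zero.mpr hx.ne'
  refine (hLi2.add (((Real.hasDerivAt_log hx0).const_mul (1 / 2)).mul
    (hasDerivAt_log_one_sub hx))).congr_deriv ?_
  field_simp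
  ring

theorem log_mul_log_one_sub_eq (x : ℝ) :
    Real.log x * Real.log (1 - x) = x * Real.log x * dilogKernel x := by
  rcases eq_or_ne x 0 with rfl | hx
  · simp
  · rw [dilogKernel_of_ne hx]; field_simp

theorem tendsto_rogersL_nhds_zero : Tendsto rogersL (𝓝 0) (𝓝 0) := by
  have hLi2 : Tendsto Li2 (𝓝 0) (𝓝 0) := by
    simpa [Li2] using (hasDerivAt_Li2 zero_lt_one).continuousAt.tendsto
  have hprod : Tendsto (fun x => x * Real.log x * dilogKernel x) (𝓝 0) (𝓝 0) := by
    simpa using continuous_mul_log.continuousAt.tendsto.mul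
      (continuousOn_dilogKernel.continuousAt (Iio_mem_nhds one_pos)).tendsto
  have hsplit : rogersL = fun x => Li2 x + 1 / 2 * (x * Real.log x * dilogKernel x) :=
    funext fun x => by rw [rogersL, mul_assoc, log_mul_log_one_sub_eq]
  rw [hsplit]
  simpa only [mul_zero, add_zero] using hLi2.add (hprod.const_mul (1 / 2))

theorem hasDerivAt_rogersL_landau_sum {t : ℝ} (ht : 0 < t) :
    HasDerivAt (fun s => rogersL (-1 / s) + rogersL (1 / (1 + s))) 0 t := by
  have ht1 : 0 < 1 + t := by linarith
  have hx : -1 / t < 0 := by rw [neg_div]; exact neg_neg_of_pos (by positivity)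
  have hy : 1 / (1 + t) < 1 := (div_lt_one ht1).mpr (by linarith)
  have hderiv₁ := (hasDerivAt_rogersL hx.ne (hx.trans one_pos)).comp t
    ((hasDerivAt_const t (-1 : ℝ)).div (hasDerivAt_id t) ht.ne')
  have hderiv₂ := (hasDerivAt_rogersL (by positivity) hy).comp t
    ((hasDerivAt_const t (1 : ℝ)).div ((hasDerivAt_id t).const_add 1) ht1.ne')
  have e1 : 1 - -1 / t = (1 + t) / t := by field_simp; ring
  have e2 : 1 - 1 / (1 + t) = t / (1 + t) := by field_simp; ring
  have e3 : Real.log (-1 / t) = -Real.log t := by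
    rw [neg_div, Real.log_neg_eq_log, one_div, Real.log_inv]
  have e4 : Real.log (1 / (1 + t)) = -Real.log (1 + t) := by rw [one_div, Real.log_inv]
  refine (hderiv₁.add hderiv₂).congr_deriv ?_
  simp only [id, e1, e2, e3, e4, Real.log_div ht1.ne' ht.ne', Real.log_div ht.ne' ht1.ne']
  field_simp
  ring

theorem tendsto_rogersL_landau_sum_atTop :
    Tendsto (fun s => rogersL (-1 / s) + rogersL (1 / (1 + s))) atTop (𝓝 0) := by
  have hx : Tendsto (fun s : ℝ => -1 / s) atTop (𝓝 0) :=
    tendsto_const_nhds.div_atTop tendsto_id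
  have hy : Tendsto (fun s : ℝ => 1 / (1 + s)) atTop (𝓝 0) :=
    tendsto_const_nhds.div_atTop (tendsto_atTop_add_const_left _ 1 tendsto_id)
  simpa using (tendsto_rogersL_nhds_zero.comp hx).add (tendsto_rogersL_nhds_zero.comp hy)

/-- Landau's identity for the Rogers dilogarithm. -/
theorem rogersL_landau (t : ℝ) (ht : 0 < t) :
    rogersL (-1 / t) = -rogersL (1 / (1 + t)) :=
  eq_neg_of_add_eq_zero_left <| eq_of_hasDerivAt_zero_of_tendsto_atTop
    (fun _ hs => hasDerivAt_rogersL_landau_sum hs) tendsto_rogersL_landau_sum_atTop ht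
end

section
/- Let c < d be reals. Then the function x ↦ (2/(x−d))·log|(x−c)/(d−c)| − (2/(x−c))·log|(x−d)/(c−d)| on (−∞, c) equals 4·(d/dx)[𝓛((x−c)/(d−c))], where 𝓛 is the real Rogers dilogarithm extended to negative arguments by 𝓛(x) = Li₂(x) + (1/2)·log|x|·log(1−x). Consequently ∫_{−∞}^{0} of this function in x (taking c = 2, d = 2+2a with a ∈ (0,1)) equals 4·𝓛(a/(1+a)). -/
/-!
On `(-∞, 1) \ {0}` one has `𝓛'(y) = -(log (1 - y) / y + log |y| / (1 - y)) / 2`; after the affine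
substitution `u = (x - c) / (d - c)` this is a quarter of the integrand, and it is nonnegative for
`u < 0`. Hence the improper integral equals `4 (𝓛(-1/a) - lim_{y → -∞} 𝓛(y))`. Landau's identity,
in the form "`𝓛(-1/s) - 𝓛(s/(1+s))` is constant for `s > 0`" (its derivative vanishes), gives
both that limit (let `s → 0⁺`, using continuity of `𝓛` at `0`) and `𝓛(-1/a) - lim 𝓛 = 𝓛(a/(1+a))`.
-/

open Real MeasureTheory

open Set Filter Topology

-- `dslope (fun t => log (1 - t)) 0` is the integrand of `Li2` with its removable singularity at `0`
-- filled in, so `Li2` is the primitive of a function continuous on `(-∞, 1)`.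
lemma dslope_log_one_sub_of_ne {t : ℝ} (ht : t ≠ 0) :
    dslope (fun t => log (1 - t)) 0 t = log (1 - t) / t := by
  rw [dslope_of_ne _ ht, slope_def_field]
  simp

lemma continuousOn_dslope_log_one_sub :
    ContinuousOn (dslope (fun t => log (1 - t)) 0) (Iio 1) := by
  intro t ht
  have hlog : ∀ x < (1 : ℝ), DifferentiableAt ℝ (fun t => log (1 - t)) x := fun x hx =>
    ((differentiableAt_const 1).sub differentiableAt_id).log (by simp; linarith)
  refine ContinuousAt.continuousWithinAt ?_
  rcases eq_or_ne t 0 with rfl | ht0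
  · exact continuousAt_dslope_same.2 (hlog 0 one_pos)
  · exact (continuousAt_dslope_of_ne ht0).2 (hlog t ht).continuousAt

lemma Li2_eq_neg_integral_dslope (x : ℝ) :
    Li2 x = -∫ t in (0 : ℝ)..x, dslope (fun t => log (1 - t)) 0 t := by
  rw [Li2, intervalIntegral.integral_congr_ae]
  filter_upwards [volume.ae_ne 0] with t ht _
  rw [dslope_log_one_sub_of_ne ht]

lemma hasDerivAt_Li2_s10 {y : ℝ} (hy : y < 1) :
    HasDerivAt Li2 (-dslope (fun t => log (1 - t)) 0 y) y := by
  have hsub : uIcc 0 y ⊆ Iio 1 := fun t ht => lt_of_le_of_lt ht.2 (max_lt one_pos hy)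
  rw [funext Li2_eq_neg_integral_dslope]
  exact (intervalIntegral.integral_hasDerivAt_right
    (continuousOn_dslope_log_one_sub.mono hsub).intervalIntegrable
    (continuousOn_dslope_log_one_sub.stronglyMeasurableAtFilter isOpen_Iio y hy)
    (continuousOn_dslope_log_one_sub.continuousAt (Iio_mem_nhds hy))).neg

lemma rogersL_eq_Li2_add_mul_log_mul_dslope (x : ℝ) :
    rogersL x = Li2 x + 1 / 2 * (x * log x) * dslope (fun t => log (1 - t)) 0 x := by
  rcases eq_or_ne x 0 with rfl | hx
  · simp [rogersL]
  · rw [rogersL, dslope_log_one_sub_of_ne hx]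
    field_simp

lemma continuousOn_rogersL : ContinuousOn rogersL (Iio 1) := by
  have hLi2 : ContinuousOn Li2 (Iio 1) := fun y hy =>
    (hasDerivAt_Li2_s10 hy).continuousAt.continuousWithinAt
  simp_rw [funext rogersL_eq_Li2_add_mul_log_mul_dslope]
  exact hLi2.add ((continuousOn_const.mul continuous_mul_log.continuousOn).mul
    continuousOn_dslope_log_one_sub)

lemma hasDerivAt_rogersL_s10 {y : ℝ} (hy0 : y ≠ 0) (hy1 : y < 1) :
    HasDerivAt rogersL (-(log (1 - y) / y + log y / (1 - y)) / 2) y := by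
  have h1y : 1 - y ≠ 0 := by linarith
  have hlog : HasDerivAt (fun x => log (1 - x)) (-1 / (1 - y)) y := by
    simpa [div_eq_mul_inv] using ((hasDerivAt_id y).const_sub 1).log h1y
  have : HasDerivAt rogersL _ y := (hasDerivAt_Li2_s10 hy1).add
    (((Real.hasDerivAt_log hy0).const_mul (1 / 2)).mul hlog)
  refine this.congr_deriv ?_
  rw [dslope_log_one_sub_of_ne hy0]
  field_simp
  ring

lemma rogersL_zero : rogersL 0 = 0 := by
  simp [rogersL, Li2]

lemma hasDerivAt_rogersL_neg_one_div_sub {s : ℝ} (hs : 0 < s) :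
    HasDerivAt (fun s => rogersL (-1 / s) - rogersL (s / (1 + s))) 0 s := by
  have h1s : 0 < 1 + s := by linarith
  have hinv : HasDerivAt (fun s : ℝ => -1 / s) _ s :=
    (hasDerivAt_const s (-1 : ℝ)).div (hasDerivAt_id' s) hs.ne'
  have hfrac : HasDerivAt (fun s : ℝ => s / (1 + s)) _ s :=
    (hasDerivAt_id' s).div ((hasDerivAt_id' s).const_add 1) h1s.ne'
  have hy : -1 / s < 0 := div_neg_of_neg_of_pos (by norm_num) hs
  have hz : s / (1 + s) < 1 := (div_lt_one h1s).2 (by linarith)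
  have := ((hasDerivAt_rogersL_s10 hy.ne (by linarith)).comp s hinv).sub
    ((hasDerivAt_rogersL_s10 (div_pos hs h1s).ne' hz).comp s hfrac)
  refine this.congr_deriv ?_
  rw [show 1 - -1 / s = (1 + s) / s by field_simp; ring,
    show 1 - s / (1 + s) = 1 / (1 + s) by field_simp; ring,
    log_div h1s.ne' hs.ne', log_div hs.ne' h1s.ne', neg_div s (1 : ℝ), log_neg_eq_log,
    one_div, log_inv, one_div, log_inv]
  field_simp
  ring

/-- Landau's identity `𝓛(-1/s) = -𝓛(1/(1+s))` together with Euler's reflection; the constant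
(`-π²/6`) is never evaluated. -/
lemma rogersL_neg_one_div_sub_rogersL_div_one_add {s : ℝ} (hs : 0 < s) :
    rogersL (-1 / s) - rogersL (s / (1 + s)) = rogersL (-1) - rogersL (1 / 2) := by
  have h := isOpen_Ioi.is_const_of_deriv_eq_zero isPreconnected_Ioi
    (fun x hx => (hasDerivAt_rogersL_neg_one_div_sub hx).differentiableAt.differentiableWithinAt)
    (fun x hx => (hasDerivAt_rogersL_neg_one_div_sub hx).deriv) (mem_Ioi.2 hs) (mem_Ioi.2 one_pos)
  norm_num at h
  exact h

lemma tendsto_rogersL_atBot : Tendsto rogersL atBot (𝓝 (rogersL (-1) - rogersL (1 / 2))) := by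
  have hlim : Tendsto (fun y : ℝ => 1 / (1 - y)) atBot (𝓝 0) := by
    have : Tendsto (fun y : ℝ => 1 - y) atBot atTop :=
      (tendsto_atTop_add_const_left _ 1 tendsto_neg_atBot_atTop).congr fun y => by ring
    simpa only [one_div, Function.comp_def] using tendsto_inv_atTop_zero.comp this
  have h := tendsto_const_nhds (x := rogersL (-1) - rogersL (1 / 2)) |>.add
    ((continuousOn_rogersL.continuousAt (Iio_mem_nhds one_pos)).tendsto.comp hlim)
  rw [rogersL_zero, add_zero] at h
  refine h.congr' ?_
  filter_upwards [eventually_lt_atBot 0] with y hy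
  have := rogersL_neg_one_div_sub_rogersL_div_one_add (div_pos_of_neg_of_neg neg_one_lt_zero hy)
  rw [show -1 / (-1 / y) = y by field_simp, show -1 / y / (1 + -1 / y) = 1 / (1 - y) by
    rw [div_div, mul_add, mul_one, mul_div_cancel₀ _ hy.ne, neg_div, ← div_neg]; ring_nf] at this
  simp only [Function.comp_apply]
  linarith

lemma log_div_one_add_le_log_one_add_div {t : ℝ} (ht : 0 < t) :
    log t / (1 + t) ≤ log (1 + t) / t := by
  rcases le_or_gt t 1 with h1 | h1
  · exact (div_nonpos_of_nonpos_of_nonneg (log_nonpos ht.le h1) (by linarith)).trans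
      (div_nonneg (log_nonneg (by linarith)) ht.le)
  · have hexp : exp (-1) ≤ t := (exp_le_one_iff.2 (by norm_num)).trans h1.le
    have := mul_log_strictMonoOn.monotoneOn hexp (hexp.trans (by linarith))
      (by linarith : t ≤ 1 + t)
    rw [div_le_div_iff₀ (by linarith) ht]
    linarith

lemma rogersL_deriv_nonneg {u : ℝ} (hu : u < 0) :
    0 ≤ -(log (1 - u) / u + log u / (1 - u)) / 2 := by
  obtain ⟨t, ht, rfl⟩ : ∃ t, 0 < t ∧ u = -t := ⟨-u, by linarith, by ring⟩
  have := log_div_one_add_le_log_one_add_div ht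
  rw [log_neg_eq_log, sub_neg_eq_add, div_neg]
  linarith

noncomputable def logKernel (c d x : ℝ) : ℝ :=
  2 / (x - d) * log |(x - c) / (d - c)| - 2 / (x - c) * log |(x - d) / (c - d)|

lemma logKernel_eq {c d x : ℝ} (hcd : c < d) (hx : x < c) :
    logKernel c d x = 4 * (-(log (1 - (x - c) / (d - c)) / ((x - c) / (d - c)) +
      log ((x - c) / (d - c)) / (1 - (x - c) / (d - c))) / 2) / (d - c) := by
  have hdc : d - c ≠ 0 := by linarith
  have hxc : x - c ≠ 0 := by linarith
  have hxd : x - d ≠ 0 := by linarith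
  have hcd' : c - d ≠ 0 := by linarith
  have h1 : 1 - (x - c) / (d - c) = (x - d) / (c - d) := by
    field_simp
    ring
  rw [logKernel, log_abs, log_abs, h1]
  field_simp
  ring

lemma hasDerivAt_rogersL_sub_div {c d x : ℝ} (hcd : c < d) (hx : x < c) :
    HasDerivAt (fun t => rogersL ((t - c) / (d - c))) (logKernel c d x / 4) x := by
  have hdc : 0 < d - c := by linarith
  have hu : (x - c) / (d - c) < 0 := div_neg_of_neg_of_pos (by linarith) hdc
  refine ((hasDerivAt_rogersL_s10 hu.ne (by linarith)).comp x
    (((hasDerivAt_id' x).sub_const c).div_const (d - c))).congr_deriv ?_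
  rw [logKernel_eq hcd hx]
  ring

lemma logKernel_nonneg {c d x : ℝ} (hcd : c < d) (hx : x < c) : 0 ≤ logKernel c d x := by
  rw [logKernel_eq hcd hx]
  exact div_nonneg (mul_nonneg zero_le_four (rogersL_deriv_nonneg
    (div_neg_of_neg_of_pos (by linarith) (by linarith)))) (by linarith)

theorem integral_Iic_of_hasDerivAt_of_nonneg' {f f' : ℝ → ℝ} {a m : ℝ}
    (hderiv : ∀ x ∈ Iic a, HasDerivAt f (f' x) x) (hf' : ∀ x ∈ Iio a, 0 ≤ f' x)
    (hf : Tendsto f atBot (𝓝 m)) : ∫ x in Iic a, f' x = f a - m := by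
  have h := integral_Ioi_of_hasDerivAt_of_nonneg' (g := fun y => -f (-y)) (g' := fun y => f' (-y))
    (a := -a) (l := -m)
    (fun y hy =>
      (((hderiv (-y) (mem_Iic.2 (neg_le.1 hy))).comp y (hasDerivAt_neg y)).neg).congr_deriv
        (by ring))
    (fun y hy => hf' (-y) (mem_Iio.2 (neg_lt.1 hy))) ((hf.comp tendsto_neg_atTop_atBot).neg)
  rw [integral_comp_neg_Ioi, neg_neg] at h
  rw [h]
  ring

lemma integral_Iio_logKernel {b c d : ℝ} (hcd : c < d) (hb : b < c) :
    ∫ x in Iio b, logKernel c d x =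
      4 * (rogersL ((b - c) / (d - c)) - (rogersL (-1) - rogersL (1 / 2))) := by
  have hlim : Tendsto (fun t => (t - c) / (d - c)) atBot atBot :=
    (tendsto_atBot_add_const_right _ (-c) tendsto_id).atBot_div_const (by linarith)
  rw [← integral_Iic_eq_integral_Iio, integral_Iic_of_hasDerivAt_of_nonneg'
    (f := fun t => 4 * rogersL ((t - c) / (d - c)))
    (fun x hx => ((hasDerivAt_rogersL_sub_div hcd (lt_of_le_of_lt hx hb)).const_mul 4).congr_deriv
      (by ring))
    (fun x hx => logKernel_nonneg hcd (hx.trans hb))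
    ((tendsto_rogersL_atBot.comp hlim).const_mul 4)]
  ring

/-- The inner-integral value is `4` times the derivative of
`x ↦ 𝓛((x−c)/(d−c))` on `(−∞,c)`; consequently, with `c = 2` and `d = 2+2a`,
its integral over `(−∞,0)` equals `4·𝓛(a/(1+a))`. -/
theorem deriv_rogersL_and_outer_integral (c d : ℝ) (hcd : c < d) :
    (∀ x < c,
        (2 / (x - d)) * Real.log |(x - c) / (d - c)|
            - (2 / (x - c)) * Real.log |(x - d) / (c - d)| =
          4 * deriv (fun t : ℝ => rogersL ((t - c) / (d - c))) x) ∧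
      ∀ a : ℝ, 0 < a → a < 1 →
        (∫ x in Set.Iio (0 : ℝ),
            ((2 / (x - (2 + 2 * a))) * Real.log |(x - 2) / ((2 + 2 * a) - 2)|
              - (2 / (x - 2)) * Real.log |(x - (2 + 2 * a)) / (2 - (2 + 2 * a))|)) =
          4 * rogersL (a / (1 + a)) := by
  refine ⟨fun x hx => ?_, fun a ha _ => ?_⟩
  · rw [(hasDerivAt_rogersL_sub_div hcd hx).deriv]
    exact (mul_div_cancel₀ _ four_ne_zero).symm
  · have h := integral_Iio_logKernel (d := 2 + 2 * a) (by linarith) two_pos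
    rw [show (0 - 2) / (2 + 2 * a - 2) = -1 / a by field_simp [ha.ne']; ring,
      ← rogersL_neg_one_div_sub_rogersL_div_one_add ha, sub_sub_cancel] at h
    exact h
end
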